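/- arXiv:2305.19975 — 3 statements merged into one kernel-verified Lean document; each statement's English description precedes it below -/
import Mathlib

section
/- Let λ be a partition with λ₁ = r and conjugate λ', let m ∈ ℤ_{>0}, and let N ≥ l(λ)+1. Let L be a semistandard tableau of shape λ with entries in {1,…,N}, and let M = (w₁,…,w_m) be a semistandard tableau of shape (m) with entries in {1,…,N}. Let s = (s_{ij}) ∈ T(λ,ℂ) and t = (t₁,…,t_m) ∈ T((m),ℂ). Suppose the tableau T = (⋯(L ← w₁) ← ⋯) ← w_m obtained by successive Schensted row insertions has shape λ^J for some J = {α₁ < ⋯ < α_m} ∈ H(λ,m). Then Σ_sym 1/(L^s · M^t) = Σ_sym 1/T^{u^J}, where Σ_sym denotes the sum over all permutations of the variables {t₁,…,t_r, s_{11},…,s_{λ'₂ 1}, s_{12},…,s_{λ'₂ 2}, s_{13},…,s_{λ'₃ 3}, …, s_{1r},…,s_{λ'_r r}} among their positions (the same permutation applied on both sides). -/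
open scoped Classical

noncomputable section

/-- A shape function: row lengths (0-indexed), eventually zero.
A *partition* is an antitone shape. -/
structure Shape where
  part : ℕ → ℕ
  exists_zero' : ∃ n, ∀ m, n ≤ m → part m = 0

namespace Shape

lemma cells_finite (p : Shape) : {c : ℕ × ℕ | c.2 < p.part c.1}.Finite := by
  obtain ⟨n, hn⟩ := p.exists_zero'
  refine Set.Finite.subset
    ((Set.finite_Iio n).prod (Set.finite_Iio ((Finset.range n).sup p.part))) ?_
  rintro ⟨i, j⟩ hij
  simp only [Set.mem_setOf_eq] at hij
  have hi : i < n := by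
    by_contra hcon
    push_neg at hcon
    rw [hn i hcon] at hij
    omega
  exact ⟨hi, lt_of_lt_of_le hij (Finset.le_sup (Finset.mem_range.mpr hi))⟩

/-- The cells of the Young diagram `D(λ)` (0-indexed matrix coordinates). -/
def cells (p : Shape) : Finset (ℕ × ℕ) := (cells_finite p).toFinset

lemma mem_cells {p : Shape} {c : ℕ × ℕ} : c ∈ p.cells ↔ c.2 < p.part c.1 := by
  simp [cells]

lemma conj_exists (p : Shape) (j : ℕ) : ∃ n, p.part n ≤ j := by
  obtain ⟨n, hn⟩ := p.exists_zero'
  exact ⟨n, by simp [hn n le_rfl]⟩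

/-- The conjugate parts (column lengths): `conjPart p j` is the length of column `j`. -/
def conjPart (p : Shape) (j : ℕ) : ℕ := Nat.find (p.conj_exists j)

/-- The conjugate shape `λ'`. -/
def conj (p : Shape) : Shape :=
  ⟨p.conjPart, p.part 0, fun _ hm => (Nat.find_eq_zero _).mpr hm⟩

/-- The number of (nonzero) rows `l(λ)`. -/
def length (p : Shape) : ℕ := p.conjPart 0

/-- The number of cells `|λ|`. -/
def size (p : Shape) : ℕ := p.cells.card

end Shape

/-- A semistandard Young tableau of shape `p` with positive integer entries
(rows weakly increase, columns strictly increase; entries outside the shape are `0`). -/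
structure Tab (p : Shape) where
  entry : ℕ → ℕ → ℕ
  pos' : ∀ i j, j < p.part i → 0 < entry i j
  row_weak' : ∀ i j1 j2, j1 ≤ j2 → j2 < p.part i → entry i j1 ≤ entry i j2
  col_strict' : ∀ i1 i2 j, i1 < i2 → j < p.part i2 → entry i1 j < entry i2 j
  zeros' : ∀ i j, p.part i ≤ j → entry i j = 0

/-- `M^s = ∏_{(i,j) ∈ D(λ)} m_{ij}^{s_{ij}}`. -/
def Tab.pw {p : Shape} (T : Tab p) (s : ℕ × ℕ → ℂ) : ℂ :=
  ∏ c ∈ p.cells, (T.entry c.1 c.2 : ℂ) ^ s c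

/-- The Schur multiple zeta function `ζ_λ(s)`. -/
def zeta (p : Shape) (s : ℕ × ℕ → ℂ) : ℂ := ∑' T : Tab p, 1 / T.pw s

/-- The truncated Schur multiple zeta function `ζ_λ^{(N)}(s)`
(the sum over tableaux with entries in `{1,…,N}`, a finite sum). -/
def zetaTr (N : ℕ) (p : Shape) (s : ℕ × ℕ → ℂ) : ℂ :=
  ∑' T : {T : Tab p // ∀ i j, T.entry i j ≤ N}, 1 / T.1.pw s

/-- `Σ_sym`: the sum over all permutations of the variables at the positions
satisfying `P` (positions outside `P` stay fixed). -/
def symSum {V : Type} [Fintype V] [DecidableEq V] (P : V → Prop) (v : V → ℂ)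
    (F : (V → ℂ) → ℂ) : ℂ :=
  ∑ σ ∈ Finset.univ.filter (fun σ : Equiv.Perm V => ∀ x, ¬ P x → σ x = x), F (v ∘ σ)

/-- The row lengths of `λ_K`. -/
def addParts (p : Shape) (K : Finset ℕ) : ℕ → ℕ :=
  fun k => if k ∈ K then p.part k + 1 else p.part k

/-- The shape `λ_K`. -/
def shapeAdd (p : Shape) (K : Finset ℕ) : Shape :=
  ⟨addParts p K, by
    obtain ⟨n, hn⟩ := p.exists_zero'
    refine ⟨n + (K.sup id) + 1, fun m hm => ?_⟩
    have h1 : m ∉ K := by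
      intro h
      have := Finset.le_sup (f := id) h
      simp only [id] at this
      omega
    have h2 : p.part m = 0 := hn m (by omega)
    simp [addParts, h1, h2]⟩

/-- `E(λ,n)`: the sets `K` of `n` row indices such that `λ_K` is again a partition. -/
def Eset (p : Shape) (n : ℕ) : Finset (Finset ℕ) :=
  (Finset.range (p.length + n)).powerset.filter
    (fun K => K.card = n ∧ Antitone (addParts p K))

/-- `H(λ,m) = E(λ',m)`. -/
def Hset (p : Shape) (m : ℕ) : Finset (Finset ℕ) := Eset p.conj m

/-- `λ_K`. -/
def shapeE (p : Shape) (K : Finset ℕ) : Shape := shapeAdd p K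

/-- `λ^J = ((λ')_J)'`. -/
def shapeH (p : Shape) (J : Finset ℕ) : Shape := (shapeAdd p.conj J).conj

/-- The filling `u^J` of `λ^J`: `t_j` goes into box `(1, α_j)` for the `j`-th element
`α_j` of `J`, and `s_{ij}` goes into box `(i,j)` if `j ∉ J`, into box `(i+1,j)` if `j ∈ J`. -/
def pushH (J : Finset ℕ) (s : ℕ × ℕ → ℂ) (t : ℕ → ℂ) : ℕ × ℕ → ℂ :=
  fun c =>
    if c.2 ∈ J then
      if c.1 = 0 then t ((J.filter (· < c.2)).card) else s (c.1 - 1, c.2)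
    else s c

/-- The filling `u_K` of `λ_K`: `s_k` goes into box `(β_k, 1)` for the `k`-th element
`β_k` of `K`, and `t_{ij}` goes into box `(i,j)` if `i ∉ K`, into box `(i,j+1)` if `i ∈ K`. -/
def pushE (K : Finset ℕ) (s : ℕ → ℂ) (t : ℕ × ℕ → ℂ) : ℕ × ℕ → ℂ :=
  fun c =>
    if c.1 ∈ K then
      if c.2 = 0 then s ((K.filter (· < c.1)).card) else t (c.1, c.2 - 1)
    else t c

/-- The one-row shape `(m)`. -/
def rowShape (m : ℕ) : Shape :=
  ⟨fun i => if i = 0 then m else 0, 1, fun _ hk => if_neg (by omega)⟩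

/-- The one-column shape `(1^n)`. -/
def colShape (n : ℕ) : Shape :=
  ⟨fun i => if i < n then 1 else 0, n, fun _ hk => if_neg (by omega)⟩

/-- Variable positions for the `H`-type Pieri rule: the cells of `λ` (variables `s_{ij}`)
together with `m` positions for the variables `t_1, …, t_m`. -/
abbrev VH (p : Shape) (m : ℕ) := {c : ℕ × ℕ // c ∈ p.cells} ⊕ Fin m

/-- The filling `s` of `λ` extracted from an assignment of values to the variables. -/
def sfillH (p : Shape) (m : ℕ) (v : VH p m → ℂ) : ℕ × ℕ → ℂ :=
  fun c => if h : c ∈ p.cells then v (Sum.inl ⟨c, h⟩) else 0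

/-- The tuple `(t_1, …, t_m)` (0-indexed) extracted from an assignment. -/
def tfillH (p : Shape) (m : ℕ) (v : VH p m → ℂ) : ℕ → ℂ :=
  fun k => if h : k < m then v (Sum.inr ⟨k, h⟩) else 0

/-- The set of variables permuted by `Σ_sym` in the `H`-type Pieri rule:
`t_1, …, t_r` and all `s_{ij}` except `s_{λ'_2+1,1}, …, s_{λ'_1,1}`
(the first column below row `λ'_2`). -/
def PH (p : Shape) (m : ℕ) : VH p m → Prop :=
  Sum.elim (fun c => c.1.2 ≠ 0 ∨ c.1.1 < p.conjPart 1) (fun k : Fin m => (k : ℕ) < p.part 0)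

/-- Variable positions for the `E`-type Pieri rule: `n` positions for `s_1, …, s_n`
together with the cells of `λ` (variables `t_{ij}`). -/
abbrev VE (p : Shape) (n : ℕ) := Fin n ⊕ {c : ℕ × ℕ // c ∈ p.cells}

/-- The tuple `(s_1, …, s_n)` (0-indexed) extracted from an assignment. -/
def sfillE (p : Shape) (n : ℕ) (v : VE p n → ℂ) : ℕ → ℂ :=
  fun k => if h : k < n then v (Sum.inl ⟨k, h⟩) else 0

/-- The filling `t` of `λ` extracted from an assignment. -/
def tfillE (p : Shape) (n : ℕ) (v : VE p n → ℂ) : ℕ × ℕ → ℂ :=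
  fun c => if h : c ∈ p.cells then v (Sum.inr ⟨c, h⟩) else 0

/-- The set of variables permuted by `Σ_sym` in the `E`-type Pieri rule:
`s_1, …, s_s` and all `t_{ij}` except `t_{1,λ_2+1}, …, t_{1,λ_1}`
(the first row beyond column `λ_2`). -/
def PE (p : Shape) (n : ℕ) : VE p n → Prop :=
  Sum.elim (fun k : Fin n => (k : ℕ) < p.length) (fun c => c.1.1 ≠ 0 ∨ c.1.2 < p.part 1)

/-- A skew semistandard tableau of shape `l/m` (entries outside the skew shape are `0`). -/
structure SkewTab (l m : Shape) where
  entry : ℕ → ℕ → ℕ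
  pos' : ∀ i j, m.part i ≤ j → j < l.part i → 0 < entry i j
  row_weak' : ∀ i j1 j2, j1 ≤ j2 → m.part i ≤ j1 → j2 < l.part i → entry i j1 ≤ entry i j2
  col_strict' : ∀ i1 i2 j, i1 < i2 → m.part i1 ≤ j → j < l.part i2 → entry i1 j < entry i2 j
  zeros' : ∀ i j, ¬(m.part i ≤ j ∧ j < l.part i) → entry i j = 0

/-- The skew tableau `T` has weight `n`: the value `v+1` occurs `n.part v` times. -/
def SkewTab.hasWeight {l m : Shape} (T : SkewTab l m) (n : Shape) : Prop :=
  ∀ v : ℕ,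
    ((l.cells.filter (fun c => m.part c.1 ≤ c.2)).filter
      (fun c => T.entry c.1 c.2 = v + 1)).card = n.part v

/-- Row `i` of a skew tableau, read from left to right. -/
def SkewTab.rowWord {l m : Shape} (T : SkewTab l m) (i : ℕ) : List ℕ :=
  (List.range (l.part i - m.part i)).map (fun k => T.entry i (m.part i + k))

/-- The reading word: concatenate the rows starting from the bottom row. -/
def SkewTab.readingWord {l m : Shape} (T : SkewTab l m) : List ℕ :=
  ((List.range l.length).reverse.map T.rowWord).foldr (· ++ ·) []

/-- A word is Yamanouchi if every suffix contains at least as many `i`'s as `(i+1)`'s. -/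
def IsYamanouchi (w : List ℕ) : Prop :=
  ∀ j i : ℕ, (w.drop j).count (i + 2) ≤ (w.drop j).count (i + 1)

/-- The Littlewood–Richardson coefficient `c^λ_{μν}` (`lrCoeff μ ν λ`): the number of
skew semistandard tableaux of shape `λ/μ` and weight `ν` whose reading word is Yamanouchi. -/
def lrCoeff (m n l : Shape) : ℕ :=
  Nat.card {T : SkewTab l m // T.hasWeight n ∧ IsYamanouchi T.readingWord}

/-- A finset of cells which is a Young diagram. -/
def IsDiagram (C : Finset (ℕ × ℕ)) : Prop :=
  ∀ i j : ℕ, ((i + 1, j) ∈ C → (i, j) ∈ C) ∧ ((i, j + 1) ∈ C → (i, j) ∈ C)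

/-- The shape whose row lengths are the row sizes of `C`. -/
def ofCells (C : Finset (ℕ × ℕ)) : Shape :=
  ⟨fun i => (C.filter (fun c => c.1 = i)).card,
   (C.sup Prod.fst) + 1, fun k hk => by
      rw [Finset.card_eq_zero, Finset.filter_eq_empty_iff]
      intro c hc
      have := Finset.le_sup (f := Prod.fst) hc
      omega⟩

/-- Variable positions for the Littlewood–Richardson rule: the cells of `μ`
(variables `s_{ij}`) and of `ν` (variables `t_{ij}`). -/
abbrev VLR (mu nu : Shape) := {c : ℕ × ℕ // c ∈ mu.cells} ⊕ {c : ℕ × ℕ // c ∈ nu.cells}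

/-- The filling `s` of `μ` extracted from an assignment. -/
def sfillLR (mu nu : Shape) (v : VLR mu nu → ℂ) : ℕ × ℕ → ℂ :=
  fun c => if h : c ∈ mu.cells then v (Sum.inl ⟨c, h⟩) else 0

/-- The filling `t` of `ν` extracted from an assignment. -/
def tfillLR (mu nu : Shape) (v : VLR mu nu → ℂ) : ℕ × ℕ → ℂ :=
  fun c => if h : c ∈ nu.cells then v (Sum.inr ⟨c, h⟩) else 0

/-- A filling of the cells `C` by the variables, specified by a bijection
`U : C ≃ V` between the cells and the variable positions. -/
def uFill (C : Finset (ℕ × ℕ)) {V : Type} (U : {c : ℕ × ℕ // c ∈ C} ≃ V) (v : V → ℂ) :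
    ℕ × ℕ → ℂ :=
  fun c => if h : c ∈ C then v (U ⟨c, h⟩) else 0

/-- The number of entries of `T` equal to `x`. -/
def entryCount {p : Shape} (T : Tab p) (x : ℕ) : ℕ :=
  (p.cells.filter (fun c => T.entry c.1 c.2 = x)).card

/-- Schensted row insertion: `B` is the result of row-inserting the letter `w` into `A`.
The inserted values are `x 0 = w, x 1, …`; for `l < k` the value `x l` bumps the entry
at `(l, j l)`, the leftmost entry of row `l` exceeding `x l`, and finally `x k` is placed
at the end of row `k`. -/
def IsRowInsert (A : Σ p : Shape, Tab p) (w : ℕ) (B : Σ p : Shape, Tab p) : Prop :=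
  ∃ (k : ℕ) (x : ℕ → ℕ) (j : ℕ → ℕ),
    x 0 = w ∧
    (∀ l, l < k →
      j l < A.1.part l ∧
      x l < A.2.entry l (j l) ∧
      (∀ j', j' < j l → A.2.entry l j' ≤ x l) ∧
      x (l + 1) = A.2.entry l (j l)) ∧
    (∀ j', j' < A.1.part k → A.2.entry k j' ≤ x k) ∧
    B.1.part = (fun i => if i = k then A.1.part i + 1 else A.1.part i) ∧
    B.2.entry = (fun i j' =>
      if i < k ∧ j' = j i then x i
      else if i = k ∧ j' = A.1.part k then x k
      else A.2.entry i j')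

/-- Schensted column insertion: `B` is the result of column-inserting the letter `w`
into `A`. For `l < k` the value `x l` bumps the entry at `(i l, l)`, the topmost entry
of column `l` which is `≥ x l`, and finally `x k` is placed at the bottom of column `k`. -/
def IsColInsert (w : ℕ) (A : Σ p : Shape, Tab p) (B : Σ p : Shape, Tab p) : Prop :=
  ∃ (k : ℕ) (x : ℕ → ℕ) (i : ℕ → ℕ),
    x 0 = w ∧
    (∀ l, l < k →
      i l < A.1.conjPart l ∧
      x l ≤ A.2.entry (i l) l ∧
      (∀ i', i' < i l → A.2.entry i' l < x l) ∧
      x (l + 1) = A.2.entry (i l) l) ∧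
    (∀ i', i' < A.1.conjPart k → A.2.entry i' k < x k) ∧
    B.1.part = (fun r => if r = A.1.conjPart k then A.1.part r + 1 else A.1.part r) ∧
    B.2.entry = (fun r c =>
      if c < k ∧ r = i c then x c
      else if r = A.1.conjPart k ∧ c = k then x k
      else A.2.entry r c)

end

/-!
Both sides are sums of `1 / ∏ x, a x ^ v x` over the same variables `x`, so it suffices to find a
permutation of the variables that fixes those `Σ_sym` does not move and carries the bases `a` of
one side to those of the other. The filling `u^J` identifies the variables with the cells of
`λ^J`, so the bases on the right are the entries of `T`; those on the left are the entries of `L`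
and the letters of `M`. Row insertion only moves entries around, so the two families agree as
multisets. By the row bumping lemma the new boxes lie in strictly increasing columns, which forces
the `l`-th one to be the cell just below column `α_l` of `λ`. Hence a letter `w_l` with `l > λ₁`
lands in the first row and, all later letters being larger, is never bumped again; and the first
column below row `λ'₂` is only pushed down by one row, by the first insertion when `1 ∈ J`. So
the variables that `Σ_sym` does not move see the same bases on both sides.
-/

open Finset

namespace Shape

theorem lt_conjPart_iff {p : Shape} (hp : Antitone p.part) {i c : ℕ} :
    i < p.conjPart c ↔ c < p.part i := by
  rw [conjPart, Nat.lt_find_iff]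
  exact ⟨fun h => not_le.mp (h i le_rfl),
    fun h n hn hle => absurd ((hp hn).trans hle) (not_le.mpr h)⟩

theorem mem_cells_iff_lt_conjPart {p : Shape} (hp : Antitone p.part) {i c : ℕ} :
    (i, c) ∈ p.cells ↔ i < p.conjPart c := by
  rw [mem_cells, lt_conjPart_iff hp]

def GrowsAt (q q' : Shape) (K : ℕ) : Prop :=
  ∀ i, q'.part i = if i = K then q.part i + 1 else q.part i

namespace GrowsAt

variable {q q' : Shape} {K : ℕ}

theorem part_self (h : GrowsAt q q' K) : q'.part K = q.part K + 1 := by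
  simp [h K]

theorem part_of_ne (h : GrowsAt q q' K) {i : ℕ} (hi : i ≠ K) : q'.part i = q.part i := by
  simp [h i, hi]

theorem part_le (h : GrowsAt q q' K) (i : ℕ) : q.part i ≤ q'.part i := by
  rw [h i]
  split_ifs <;> omega

theorem unique (h : GrowsAt q q' K) {K' : ℕ} (h' : GrowsAt q q' K') : K = K' := by
  by_contra hne
  have := h.part_self
  rw [h'.part_of_ne hne] at this
  omega

theorem cells_eq (h : GrowsAt q q' K) : q'.cells = insert (K, q.part K) q.cells := by
  ext ⟨i, c⟩
  simp only [mem_cells, mem_insert, Prod.mk.injEq, h i]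
  split_ifs with hi
  · subst hi
    simp
    omega
  · simp [hi]

end GrowsAt

end Shape

theorem Equiv.Perm.exists_comp_eq_of_map_univ_eq {α β : Type*} [Fintype α] {f g : α → β}
    (h : univ.val.map f = univ.val.map g) : ∃ σ : Equiv.Perm α, g ∘ σ = f := by
  have hfib : ∀ b, Fintype.card {a // f a = b} = Fintype.card {a // g a = b} := fun b => by
    simpa [Fintype.card_subtype, Multiset.count_map, Finset.card_def, Finset.filter_val, eq_comm]
      using congrArg (Multiset.count b) h
  exact ⟨Equiv.ofFiberEquiv fun b => Fintype.equivOfCardEq (hfib b),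
    funext (Equiv.ofFiberEquiv_map _)⟩

theorem Equiv.Perm.exists_comp_eq_fixing_of_map_univ_eq {V β : Type*} [Fintype V]
    (P : V → Prop) {f g : V → β} (hfix : ∀ x, ¬ P x → f x = g x)
    (h : univ.val.map f = univ.val.map g) :
    ∃ τ : Equiv.Perm V, (∀ x, ¬ P x → τ x = x) ∧ g ∘ τ = f := by
  have hP : univ.val.map (f ∘ Subtype.val : {x // P x} → β)
      = univ.val.map (g ∘ Subtype.val : {x // P x} → β) := by
    have hnot : (univ.val.filter fun x => ¬ P x).map f = (univ.val.filter fun x => ¬ P x).map g :=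
      Multiset.map_congr rfl fun x hx => hfix x (Multiset.mem_filter.mp hx).2
    rw [← Multiset.filter_add_not P univ.val, Multiset.map_add, Multiset.map_add, hnot] at h
    simpa only [← Multiset.map_map, univ_val_map_subtype_val, filter_val] using add_right_cancel h
  obtain ⟨σ, hσ⟩ := Equiv.Perm.exists_comp_eq_of_map_univ_eq hP
  refine ⟨ofSubtype σ, fun x hx => ofSubtype_apply_of_not_mem σ hx, funext fun x => ?_⟩
  by_cases hx : P x
  · simpa [ofSubtype_apply_of_mem σ hx] using congrFun hσ ⟨x, hx⟩
  · simp [ofSubtype_apply_of_not_mem σ hx, hfix x hx]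

theorem symSum_comp_perm {V : Type} [Fintype V] [DecidableEq V] (P : V → Prop) (v : V → ℂ)
    (F : (V → ℂ) → ℂ) {τ : Equiv.Perm V} (hτ : ∀ x, ¬ P x → τ x = x) :
    symSum P v (fun w => F (w ∘ τ)) = symSum P v F := by
  refine Finset.sum_equiv (Equiv.mulRight τ) (fun σ => ?_) (fun σ _ => rfl)
  simp only [mem_filter, mem_univ, true_and, Equiv.coe_mulRight, Equiv.Perm.mul_apply]
  refine ⟨fun h x hx => by rw [hτ x hx, h x hx], fun h x hx => ?_⟩
  simpa [hτ x hx] using h x hx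

theorem symSum_one_div_prod_pow_congr {V : Type} [Fintype V] [DecidableEq V] (P : V → Prop)
    (v : V → ℂ) {f g : V → ℕ} (hfix : ∀ x, ¬ P x → f x = g x)
    (h : univ.val.map f = univ.val.map g) :
    symSum P v (fun w => 1 / ∏ x, (f x : ℂ) ^ w x)
      = symSum P v (fun w => 1 / ∏ x, (g x : ℂ) ^ w x) := by
  obtain ⟨τ, hτ, rfl⟩ := Equiv.Perm.exists_comp_eq_fixing_of_map_univ_eq P hfix h
  have hτinv : ∀ x, ¬ P x → τ⁻¹ x = x := fun x hx => by
    rw [Equiv.Perm.inv_eq_iff_eq, hτ x hx]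
  refine Eq.trans ?_ (symSum_comp_perm P v _ hτinv)
  congr 2 with w
  rw [← Equiv.prod_comp τ (fun y => (g y : ℂ) ^ (w ∘ ⇑τ⁻¹) y)]
  simp

theorem Finset.card_filter_lt_orderEmbOfFin {α : Type*} [LinearOrder α] (s : Finset α) {k : ℕ}
    (h : s.card = k) (i : Fin k) [DecidablePred (· < s.orderEmbOfFin h i)] :
    (s.filter (· < s.orderEmbOfFin h i)).card = i := by
  have : s.filter (· < s.orderEmbOfFin h i) = (Iio i).map (s.orderEmbOfFin h).toEmbedding := by
    ext y
    simp only [mem_filter, mem_map, mem_Iio, RelEmbedding.coe_toEmbedding]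
    constructor
    · rintro ⟨hy, hlt⟩
      obtain ⟨j, rfl⟩ : y ∈ Set.range (s.orderEmbOfFin h) := by
        rwa [range_orderEmbOfFin]
      exact ⟨j, (OrderEmbedding.lt_iff_lt _).mp hlt, rfl⟩
    · rintro ⟨j, hj, rfl⟩
      exact ⟨orderEmbOfFin_mem s h j, (OrderEmbedding.lt_iff_lt _).mpr hj⟩
  rw [this, card_map, Fin.card_Iio]

open Shape

noncomputable def Tab.entries {p : Shape} (T : Tab p) : Multiset ℕ :=
  p.cells.val.map fun c => T.entry c.1 c.2

theorem map_univ_coe_cells {q : Shape} (f : ℕ × ℕ → ℕ) :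
    (univ : Finset q.cells).val.map (fun c => f c.1) = q.cells.val.map f := by
  rw [univ_eq_attach, attach_val]
  exact Multiset.attach_map_val' _ f

namespace IsRowInsert

variable {A B C : Σ p : Shape, Tab p} {w w' : ℕ}

theorem exists_path (h : IsRowInsert A w B) :
    ∃ (k : ℕ) (x j : ℕ → ℕ), x 0 = w ∧
      (∀ l < k, j l < A.1.part l ∧ x l < A.2.entry l (j l) ∧
        (∀ j' < j l, A.2.entry l j' ≤ x l) ∧ x (l + 1) = A.2.entry l (j l)) ∧
      (∀ j' < A.1.part k, A.2.entry k j' ≤ x k) ∧ GrowsAt A.1 B.1 k ∧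
      (∀ i j', B.2.entry i j' = if i < k ∧ j' = j i then x i
        else if i = k ∧ j' = A.1.part k then x k else A.2.entry i j') ∧
      AntitoneOn j (Set.Iio k) ∧ (0 < k → A.1.part k ≤ j (k - 1)) := by
  obtain ⟨k, x, j, hx0, hpath, hlast, hpart, hentry⟩ := h
  refine ⟨k, x, j, hx0, hpath, hlast, fun i => by rw [hpart], fun i j' => by rw [hentry],
    antitoneOn_of_add_one_le Set.ordConnected_Iio fun l _ _ hl => ?_, fun hk => ?_⟩
  · have hl : l + 1 < k := hl
    obtain ⟨-, -, -, hxl⟩ := hpath l (by omega)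
    obtain ⟨hjl, -, hle, -⟩ := hpath (l + 1) hl
    by_contra! hlt
    have := A.2.col_strict' l (l + 1) (j l) (by omega) (hlt.trans hjl)
    have := hle (j l) hlt
    omega
  · obtain ⟨-, -, -, hxk⟩ := hpath (k - 1) (by omega)
    rw [Nat.sub_add_cancel hk] at hxk
    by_contra! hlt
    have := A.2.col_strict' (k - 1) k (j (k - 1)) (by omega) hlt
    have := hlast (j (k - 1)) hlt
    omega

theorem growsAt (h : IsRowInsert A w B) : ∃ K, GrowsAt A.1 B.1 K :=
  let ⟨k, _, _, _, _, _, hK, _⟩ := h.exists_path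
  ⟨k, hK⟩

theorem part_le (h : IsRowInsert A w B) (i : ℕ) : A.1.part i ≤ B.1.part i :=
  let ⟨_, hK⟩ := h.growsAt
  hK.part_le i

theorem entry_zero_of_le (h : IsRowInsert A w B) {c : ℕ} (hc : c < A.1.part 0)
    (hle : A.2.entry 0 c ≤ w) : B.2.entry 0 c = A.2.entry 0 c := by
  obtain ⟨k, x, j, rfl, hpath, -, -, hB, -⟩ := h.exists_path
  rw [hB, if_neg, if_neg (by rintro ⟨rfl, rfl⟩; omega)]
  rintro ⟨hk, rfl⟩
  have := (hpath 0 hk).2.1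
  omega

theorem entry_zero_part_zero (h : IsRowInsert A w B) (h0 : GrowsAt A.1 B.1 0) :
    B.2.entry 0 (A.1.part 0) = w := by
  obtain ⟨k, x, j, rfl, -, -, hK, hB, -⟩ := h.exists_path
  obtain rfl := hK.unique h0
  simp [hB]

theorem entry_col_zero_of_pos (h : IsRowInsert A w B) {K : ℕ} (hK : GrowsAt A.1 B.1 K)
    (hpos : 0 < A.1.part K) (i : ℕ) : B.2.entry i 0 = A.2.entry i 0 := by
  obtain ⟨k, x, j, -, -, -, hk, hB, hanti, hend⟩ := h.exists_path
  obtain rfl := hK.unique hk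
  rw [hB, if_neg, if_neg (by omega)]
  rintro ⟨hi, hj⟩
  have := hanti (show i ∈ Set.Iio K from hi) (show K - 1 ∈ Set.Iio K by simp; omega)
    (by omega)
  have := hend (by omega)
  omega

theorem entry_succ_col_zero (h : IsRowInsert A w B) {K : ℕ} (hK : GrowsAt A.1 B.1 K)
    (hcol : A.1.part K = 0) {i : ℕ} (hi : i < K) (hrow : A.1.part i ≤ 1) :
    B.2.entry (i + 1) 0 = A.2.entry i 0 := by
  obtain ⟨k, x, j, -, hpath, -, hk, hB, hanti, -⟩ := h.exists_path
  obtain rfl := hK.unique hk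
  obtain ⟨hji, -, -, hx⟩ := hpath i hi
  have hji : j i = 0 := by omega
  rw [hji] at hx
  rw [hB, ← hx]
  rcases Nat.lt_or_ge (i + 1) K with hi1 | hi1
  · have := hanti (show i ∈ Set.Iio K from hi) (show i + 1 ∈ Set.Iio K from hi1) (by omega)
    rw [if_pos ⟨hi1, by omega⟩]
  · rw [if_neg (by omega), if_pos ⟨by omega, hcol.symm⟩, show K = i + 1 by omega]

theorem entries_eq (h : IsRowInsert A w B) : B.2.entries = w ::ₘ A.2.entries := by
  obtain ⟨k, x, j, rfl, hpath, -, hK, hB, -⟩ := h.exists_path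
  set S := (range k).image fun l => (l, j l) with hSdef
  have hSsub : S ⊆ A.1.cells := by
    simp only [hSdef, image_subset_iff, mem_range, mem_cells]
    exact fun l hl => (hpath l hl).1
  have hnew : (k, A.1.part k) ∉ A.1.cells := by simp [mem_cells]
  have hsplit : A.1.cells.val = S.val + (A.1.cells \ S).val := by
    rw [sdiff_val, add_tsub_cancel_of_le (val_le_iff.mpr hSsub)]
  have hSval : S.val = (Multiset.range k).map fun l => (l, j l) := by
    rw [hSdef, image_val_of_injOn (fun a _ b _ hab => congrArg Prod.fst hab), range_val]
  have hrest : ∀ c ∈ (A.1.cells \ S).val, B.2.entry c.1 c.2 = A.2.entry c.1 c.2 := by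
    rintro ⟨i, c⟩ hc
    rw [mem_val, mem_sdiff] at hc
    show B.2.entry i c = A.2.entry i c
    rw [hB, if_neg, if_neg]
    · rintro ⟨rfl, rfl⟩
      exact hnew hc.1
    · rintro ⟨hi, rfl⟩
      exact hc.2 (mem_image.mpr ⟨i, mem_range.mpr hi, rfl⟩)
  have hBpath : (Multiset.range k).map (fun l => B.2.entry l (j l)) = (Multiset.range k).map x :=
    Multiset.map_congr rfl fun l hl => by
      rw [hB, if_pos ⟨Multiset.mem_range.mp hl, rfl⟩]
  have hApath : (Multiset.range k).map (fun l => A.2.entry l (j l))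
      = (Multiset.range k).map fun l => x (l + 1) :=
    Multiset.map_congr rfl fun l hl => ((hpath l (Multiset.mem_range.mp hl)).2.2.2).symm
  have hBnew : B.2.entry k (A.1.part k) = x k := by simp [hB]
  have hcycle : ∀ n, x n ::ₘ (Multiset.range n).map x
      = x 0 ::ₘ (Multiset.range n).map fun l => x (l + 1) := by
    intro n
    induction n with
    | zero => rfl
    | succ n ih =>
      rw [Multiset.range_succ, Multiset.map_cons, Multiset.map_cons, ih, Multiset.cons_swap]
  simp only [Tab.entries, hK.cells_eq, insert_val_of_notMem hnew, Multiset.map_cons, hsplit,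
    Multiset.map_add, hSval, Multiset.map_map, Function.comp_def, Multiset.map_congr rfl hrest,
    hBnew, hBpath, hApath, ← Multiset.cons_add, hcycle]

/-- The row bumping lemma. -/
theorem part_lt_of_le (h : IsRowInsert A w B) (h' : IsRowInsert B w' C) (hw : w ≤ w')
    {K K' : ℕ} (hK : GrowsAt A.1 B.1 K) (hK' : GrowsAt B.1 C.1 K') :
    A.1.part K < B.1.part K' := by
  obtain ⟨k, x, j, rfl, hpath, hlast, hk, hB, hanti, hend⟩ := h.exists_path
  obtain ⟨k', x', j', rfl, hpath', -, hk', -, -, -⟩ := h'.exists_path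
  obtain rfl := hK.unique hk
  obtain rfl := hK'.unique hk'
  -- while `x l ≤ x' l`, the second path bumps strictly right of the first one in row `l`
  have hstep : ∀ l < K', l ≤ K → x l ≤ x' l → l < K ∧ x (l + 1) ≤ x' (l + 1) := by
    intro l hl' hl hle
    obtain ⟨hjl', hlt', -, hx'⟩ := hpath' l hl'
    have hlK : l < K := by
      refine lt_of_le_of_ne hl fun hlK => ?_
      subst hlK
      have : B.2.entry l (j' l) ≤ x l := by
        rw [hB, if_neg (by omega)]
        split_ifs with hc
        · exact le_rfl
        · exact hlast _ (by rw [hK.part_self] at hjl'; omega)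
      omega
    obtain ⟨-, -, hbefore, hx⟩ := hpath l hlK
    have hBj : ∀ c ≠ j l, B.2.entry l c = A.2.entry l c := fun c hc => by
      rw [hB, if_neg (by tauto), if_neg (by omega)]
    have hjj : j l < j' l := by
      by_contra! hge
      rcases hge.lt_or_eq with hlt2 | heq
      · have := hbefore (j' l) hlt2
        rw [hBj _ hlt2.ne] at hlt'
        omega
      · rw [heq, hB, if_pos ⟨hlK, rfl⟩] at hlt'
        omega
    have hrow := A.2.row_weak' l (j l) (j' l) hjj.le
      (by rwa [hK.part_of_ne (by omega)] at hjl')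
    rw [hBj _ hjj.ne'] at hx'
    exact ⟨hlK, by omega⟩
  have hcmp : ∀ l, l ≤ K → l ≤ K' → x l ≤ x' l := by
    intro l
    induction l with
    | zero => exact fun _ _ => hw
    | succ l ih =>
      exact fun h1 h2 => (hstep l (by omega) (by omega) (ih (by omega) (by omega))).2
  rcases lt_trichotomy K' K with hlt | rfl | hgt
  · have := hanti (show K' ∈ Set.Iio K from hlt) (show K - 1 ∈ Set.Iio K by simp; omega)
      (by omega)
    have := (hpath K' hlt).1
    have := hend (by omega)
    rw [hK.part_of_ne hlt.ne]
    omega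
  · rw [hK.part_self]
    omega
  · exact absurd (hstep K hgt le_rfl (hcmp K le_rfl hgt.le)).1 (lt_irrefl K)

end IsRowInsert

section InsertionChain

variable {m : ℕ} {seq : ℕ → Σ q : Shape, Tab q} {w : ℕ → ℕ}

theorem exists_growsAt_of_chain (hins : ∀ l < m, IsRowInsert (seq l) (w l) (seq (l + 1))) :
    ∃ K : ℕ → ℕ, ∀ l < m, GrowsAt (seq l).1 (seq (l + 1)).1 (K l) := by
  have : ∀ l, ∃ K, l < m → GrowsAt (seq l).1 (seq (l + 1)).1 K := fun l => by
    by_cases hl : l < m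
    · obtain ⟨K, hK⟩ := (hins l hl).growsAt
      exact ⟨K, fun _ => hK⟩
    · exact ⟨0, fun h => absurd h hl⟩
  choose K hK using this
  exact ⟨K, hK⟩

theorem part_mono_of_chain (hins : ∀ l < m, IsRowInsert (seq l) (w l) (seq (l + 1)))
    {a b : ℕ} (hab : a ≤ b) (hb : b ≤ m) (i : ℕ) : (seq a).1.part i ≤ (seq b).1.part i := by
  induction b, hab using Nat.le_induction with
  | base => exact le_rfl
  | succ b _ ih => exact (ih (by omega)).trans ((hins b (by omega)).part_le i)

theorem entries_of_chain (hins : ∀ l < m, IsRowInsert (seq l) (w l) (seq (l + 1))) :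
    (seq m).2.entries = (Multiset.range m).map w + (seq 0).2.entries := by
  induction m with
  | zero => simp
  | succ m ih =>
    rw [(hins m (by omega)).entries_eq, ih fun l hl => hins l (by omega), Multiset.range_succ,
      Multiset.map_cons, Multiset.cons_add]

theorem strictMonoOn_part_of_chain (hins : ∀ l < m, IsRowInsert (seq l) (w l) (seq (l + 1)))
    (hw : MonotoneOn w (Set.Iio m)) {K : ℕ → ℕ}
    (hK : ∀ l < m, GrowsAt (seq l).1 (seq (l + 1)).1 (K l)) :
    StrictMonoOn (fun l => (seq l).1.part (K l)) (Set.Iio m) :=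
  strictMonoOn_of_lt_add_one Set.ordConnected_Iio fun l _ hl hl1 =>
    (hins l hl).part_lt_of_le (hins (l + 1) hl1) (hw hl hl1 (by omega)) (hK l hl) (hK (l + 1) hl1)

theorem entry_zero_of_chain (hins : ∀ l < m, IsRowInsert (seq l) (w l) (seq (l + 1)))
    (hw : MonotoneOn w (Set.Iio m)) {l : ℕ} (hl : l < m)
    (h0 : GrowsAt (seq l).1 (seq (l + 1)).1 0) :
    (seq m).2.entry 0 ((seq l).1.part 0) = w l := by
  suffices ∀ n, l + 1 ≤ n → n ≤ m → (seq n).2.entry 0 ((seq l).1.part 0) = w l from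
    this m hl le_rfl
  intro n hn
  induction n, hn using Nat.le_induction with
  | base => exact fun _ => (hins l hl).entry_zero_part_zero h0
  | succ n hn ih =>
    intro hnm
    have hlt : (seq l).1.part 0 < (seq n).1.part 0 := by
      have := part_mono_of_chain hins hn (by omega) 0
      rw [h0.part_self] at this
      omega
    rw [(hins n (by omega)).entry_zero_of_le hlt
      (by rw [ih (by omega)]; exact hw hl (show n < m by omega) (by omega)), ih (by omega)]

theorem entry_col_zero_of_chain (hins : ∀ l < m, IsRowInsert (seq l) (w l) (seq (l + 1)))
    {K : ℕ → ℕ} (hK : ∀ l < m, GrowsAt (seq l).1 (seq (l + 1)).1 (K l)) {a : ℕ} (ha : a ≤ m)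
    (hpos : ∀ l, a ≤ l → l < m → 0 < (seq l).1.part (K l)) (i : ℕ) :
    (seq m).2.entry i 0 = (seq a).2.entry i 0 := by
  suffices ∀ n, a ≤ n → n ≤ m → (seq n).2.entry i 0 = (seq a).2.entry i 0 from
    this m ha le_rfl
  intro n hn
  induction n, hn using Nat.le_induction with
  | base => exact fun _ => rfl
  | succ n hn ih =>
    intro hnm
    rw [(hins n (by omega)).entry_col_zero_of_pos (hK n (by omega)) (hpos n hn (by omega)) i,
      ih (by omega)]

end InsertionChain

section ShapeH

variable {p : Shape} {m : ℕ} {J : Finset ℕ}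

theorem card_of_mem_Hset (hJ : J ∈ Hset p m) : J.card = m :=
  (mem_filter.mp hJ).2.1

theorem antitone_of_mem_Hset (hJ : J ∈ Hset p m) : Antitone (shapeAdd p.conj J).part :=
  (mem_filter.mp hJ).2.2

theorem mem_cells_shapeH (hJ : J ∈ Hset p m) {i c : ℕ} :
    (i, c) ∈ (shapeH p J).cells ↔ i < p.conjPart c + if c ∈ J then 1 else 0 := by
  rw [mem_cells]
  change c < (shapeAdd p.conj J).conjPart i ↔ _
  rw [lt_conjPart_iff (antitone_of_mem_Hset hJ)]
  change i < (if c ∈ J then p.conjPart c + 1 else p.conjPart c) ↔ _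
  split_ifs <;> simp

variable (p) in
/-- The box of `λ^J` that carries the variable `x` in the filling `u^J`. -/
def cellH (hJ : J.card = m) : VH p m → ℕ × ℕ :=
  Sum.elim (fun c => (c.1.1 + if c.1.2 ∈ J then 1 else 0, c.1.2))
    fun k => (0, J.orderEmbOfFin hJ k)

theorem cellH_mem (hp : Antitone p.part) (hJ : J ∈ Hset p m) (x : VH p m) :
    cellH p (card_of_mem_Hset hJ) x ∈ (shapeH p J).cells := by
  rcases x with ⟨⟨i, c⟩, hc⟩ | k
  · rw [mem_cells_iff_lt_conjPart hp] at hc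
    simp only [cellH, Sum.elim_inl, mem_cells_shapeH hJ]
    omega
  · simp [cellH, mem_cells_shapeH hJ, orderEmbOfFin_mem]

theorem cellH_injective (hJ : J.card = m) : Function.Injective (cellH p hJ) := by
  rintro (⟨⟨i, c⟩, hc⟩ | k) (⟨⟨i', c'⟩, hc'⟩ | k') h <;>
    simp only [cellH, Sum.elim_inl, Sum.elim_inr, Prod.mk.injEq] at h
  · obtain ⟨h1, rfl⟩ := h
    simp only [Sum.inl.injEq, Subtype.mk.injEq, Prod.mk.injEq, and_true]
    omega
  · obtain ⟨h, rfl⟩ := h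
    rw [if_pos (orderEmbOfFin_mem J hJ k')] at h
    omega
  · obtain ⟨h, rfl⟩ := h
    rw [if_pos (orderEmbOfFin_mem J hJ k)] at h
    omega
  · exact congrArg Sum.inr ((J.orderEmbOfFin hJ).injective h.2)

theorem exists_cellH_eq (hp : Antitone p.part) (hJ : J ∈ Hset p m) {b : ℕ × ℕ}
    (hb : b ∈ (shapeH p J).cells) : ∃ x, cellH p (card_of_mem_Hset hJ) x = b := by
  obtain ⟨i, c⟩ := b
  rw [mem_cells_shapeH hJ] at hb
  by_cases hc : c ∈ J
  · rcases Nat.eq_zero_or_pos i with rfl | hi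
    · obtain ⟨k, hk⟩ : c ∈ Set.range (J.orderEmbOfFin (card_of_mem_Hset hJ)) := by
        rwa [range_orderEmbOfFin]
      exact ⟨Sum.inr k, by simp [cellH, hk]⟩
    · refine ⟨Sum.inl ⟨(i - 1, c), (mem_cells_iff_lt_conjPart hp).mpr ?_⟩, ?_⟩
      · simp only [hc, if_true] at hb
        omega
      · simp only [cellH, Sum.elim_inl, hc, if_true, Prod.mk.injEq, and_true]
        omega
  · refine ⟨Sum.inl ⟨(i, c), (mem_cells_iff_lt_conjPart hp).mpr ?_⟩, ?_⟩
    · simpa [hc] using hb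
    · simp [cellH, hc]

theorem pushH_cellH (hJ : J.card = m) (w : VH p m → ℂ) (x : VH p m) :
    pushH J (sfillH p m w) (tfillH p m w) (cellH p hJ x) = w x := by
  rcases x with ⟨⟨i, c⟩, hc⟩ | k
  · by_cases hcJ : c ∈ J <;> simp [cellH, pushH, sfillH, hcJ, hc]
  · show pushH J (sfillH p m w) (tfillH p m w) (0, J.orderEmbOfFin hJ k) = w (Sum.inr k)
    simp only [pushH, orderEmbOfFin_mem, if_true, card_filter_lt_orderEmbOfFin]
    simp [tfillH]

noncomputable def cellEquivH (hp : Antitone p.part) (hJ : J ∈ Hset p m) :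
    VH p m ≃ (shapeH p J).cells :=
  Equiv.ofBijective (fun x => ⟨cellH p (card_of_mem_Hset hJ) x, cellH_mem hp hJ x⟩)
    ⟨fun _ _ h => cellH_injective _ (congrArg Subtype.val h),
      fun ⟨_, hb⟩ => (exists_cellH_eq hp hJ hb).imp fun _ hx => Subtype.ext hx⟩

theorem pw_pushH (hp : Antitone p.part) (hJ : J ∈ Hset p m) (T : Tab (shapeH p J))
    (w : VH p m → ℂ) :
    T.pw (pushH J (sfillH p m w) (tfillH p m w))
      = ∏ x, (T.entry (cellH p (card_of_mem_Hset hJ) x).1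
          (cellH p (card_of_mem_Hset hJ) x).2 : ℂ) ^ w x := by
  rw [Tab.pw, ← prod_coe_sort, ← (cellEquivH hp hJ).prod_comp]
  refine prod_congr rfl fun x _ => ?_
  change _ ^ pushH J _ _ (cellH p _ x) = _
  rw [pushH_cellH]
  rfl

theorem entries_eq_map_cellH (hp : Antitone p.part) (hJ : J ∈ Hset p m) (T : Tab (shapeH p J)) :
    T.entries = univ.val.map fun x => T.entry (cellH p (card_of_mem_Hset hJ) x).1
      (cellH p (card_of_mem_Hset hJ) x).2 := by
  rw [Tab.entries, ← map_univ_coe_cells, ← Multiset.map_univ_val_equiv (cellEquivH hp hJ),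
    Multiset.map_map]
  rfl

end ShapeH

section EntryLM

variable {p : Shape} {m : ℕ}

/-- The entry of `L` or `M` whose power carries the variable `x` in `L^s M^t`. -/
def entryLM (L : Tab p) (M : Tab (rowShape m)) : VH p m → ℕ :=
  Sum.elim (fun c => L.entry c.1.1 c.1.2) fun k => M.entry 0 k

theorem cells_rowShape : (rowShape m).cells = (range m).map (Function.Embedding.sectR 0 ℕ) := by
  ext ⟨i, c⟩
  simp only [mem_cells, mem_map, mem_range, Function.Embedding.sectR_apply, Prod.mk.injEq]
  change c < (if i = 0 then m else 0) ↔ _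
  split_ifs with hi <;> simp [hi, eq_comm]

theorem pw_mul_pw_eq_prod_entryLM (L : Tab p) (M : Tab (rowShape m)) (w : VH p m → ℂ) :
    L.pw (sfillH p m w) * M.pw (fun c => tfillH p m w c.2)
      = ∏ x, (entryLM L M x : ℂ) ^ w x := by
  rw [Fintype.prod_sum_type, Tab.pw, Tab.pw, ← prod_coe_sort p.cells, cells_rowShape, prod_map]
  simp only [Function.Embedding.sectR_apply]
  rw [← Fin.prod_univ_eq_prod_range (fun k => (M.entry 0 k : ℂ) ^ tfillH p m w k)]
  congr 1
  · exact prod_congr rfl fun c _ => by simp [entryLM, sfillH, c.2]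
  · exact prod_congr rfl fun k _ => by simp [entryLM, tfillH]

theorem map_univ_entryLM (L : Tab p) (M : Tab (rowShape m)) :
    univ.val.map (entryLM L M) = L.entries + (Multiset.range m).map (M.entry 0) := by
  rw [← univ_disjSum_univ]
  refine (Multiset.map_disjSum _).trans ?_
  congr 1
  · exact map_univ_coe_cells fun c => L.entry c.1 c.2
  · rw [Fin.univ_val_map, List.ofFn_eq_map, ← Multiset.coe_range,
      ← List.map_coe_finRange_eq_range, Multiset.map_coe, List.map_map]
    rfl

end EntryLM

section PieriChain

variable {p : Shape} {m : ℕ} {J : Finset ℕ} {seq : ℕ → Σ q : Shape, Tab q} {w : ℕ → ℕ}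
  {K : ℕ → ℕ}

theorem part_mem_and_eq_conjPart_of_chain (hp : Antitone p.part) (hJ : J ∈ Hset p m)
    (hins : ∀ l < m, IsRowInsert (seq l) (w l) (seq (l + 1)))
    (hK : ∀ l < m, GrowsAt (seq l).1 (seq (l + 1)).1 (K l))
    (h0 : (seq 0).1 = p) (hm : (seq m).1 = shapeH p J) {l : ℕ} (hl : l < m) :
    (seq l).1.part (K l) ∈ J ∧ K l = p.conjPart ((seq l).1.part (K l)) := by
  have hin : (K l, (seq l).1.part (K l)) ∈ (shapeH p J).cells := by
    rw [← hm, mem_cells]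
    change (seq l).1.part (K l) < (seq m).1.part (K l)
    have := part_mono_of_chain hins (show l + 1 ≤ m from hl) le_rfl (K l)
    rw [(hK l hl).part_self] at this
    omega
  have hout : p.conjPart ((seq l).1.part (K l)) ≤ K l := by
    rw [← not_lt, lt_conjPart_iff hp, not_lt]
    have := part_mono_of_chain hins (Nat.zero_le l) hl.le (K l)
    rwa [h0] at this
  rw [mem_cells_shapeH hJ] at hin
  split_ifs at hin with hc
  · exact ⟨hc, by omega⟩
  · omega

theorem part_eq_orderEmbOfFin_of_chain (hp : Antitone p.part) (hJ : J ∈ Hset p m)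
    (hins : ∀ l < m, IsRowInsert (seq l) (w l) (seq (l + 1))) (hw : MonotoneOn w (Set.Iio m))
    (hK : ∀ l < m, GrowsAt (seq l).1 (seq (l + 1)).1 (K l))
    (h0 : (seq 0).1 = p) (hm : (seq m).1 = shapeH p J) (l : Fin m) :
    (seq l).1.part (K l) = J.orderEmbOfFin (card_of_mem_Hset hJ) l :=
  congrFun (orderEmbOfFin_unique (card_of_mem_Hset hJ)
    (fun l => (part_mem_and_eq_conjPart_of_chain hp hJ hins hK h0 hm l.2).1)
    fun _ _ hab => strictMonoOn_part_of_chain hins hw hK (Fin.is_lt _) (Fin.is_lt _) hab) l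

theorem entry_zero_of_chain_shapeH (hp : Antitone p.part) (hJ : J ∈ Hset p m)
    (hins : ∀ l < m, IsRowInsert (seq l) (w l) (seq (l + 1))) (hw : MonotoneOn w (Set.Iio m))
    (hK : ∀ l < m, GrowsAt (seq l).1 (seq (l + 1)).1 (K l))
    (h0 : (seq 0).1 = p) (hm : (seq m).1 = shapeH p J) {l : ℕ} (hl : l < m)
    (hl0 : p.part 0 ≤ l) : (seq m).2.entry 0 ((seq l).1.part (K l)) = w l := by
  have hKl := (part_mem_and_eq_conjPart_of_chain hp hJ hins hK h0 hm hl).2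
  have hle : l ≤ (seq l).1.part (K l) :=
    ((strictMonoOn_part_of_chain hins hw hK).mono (Set.Iic_subset_Iio.mpr hl)).Iic_id_le l le_rfl
  have hK0 : K l = 0 := by
    rw [hKl]
    by_contra hne
    have := (lt_conjPart_iff hp).mp (Nat.pos_of_ne_zero hne)
    omega
  have := entry_zero_of_chain hins hw hl (hK0 ▸ hK l hl)
  rwa [hK0]

theorem entry_col_zero_of_chain_shapeH (hp : Antitone p.part) (hJ : J ∈ Hset p m)
    (hins : ∀ l < m, IsRowInsert (seq l) (w l) (seq (l + 1))) (hw : MonotoneOn w (Set.Iio m))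
    (hK : ∀ l < m, GrowsAt (seq l).1 (seq (l + 1)).1 (K l))
    (h0 : (seq 0).1 = p) (hm : (seq m).1 = shapeH p J) {i : ℕ} (hi1 : p.conjPart 1 ≤ i)
    (hi0 : i < p.conjPart 0) :
    (seq m).2.entry (i + if 0 ∈ J then 1 else 0) 0 = (seq 0).2.entry i 0 := by
  have hbox := fun l (hl : l < m) => part_mem_and_eq_conjPart_of_chain hp hJ hins hK h0 hm hl
  split_ifs with hJ0
  · have hm0 : 0 < m := card_of_mem_Hset hJ ▸ card_pos.mpr ⟨0, hJ0⟩
    have hc0 : (seq 0).1.part (K 0) = 0 := by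
      have := part_eq_orderEmbOfFin_of_chain hp hJ hins hw hK h0 hm ⟨0, hm0⟩
      rw [orderEmbOfFin_zero _ hm0] at this
      exact this.trans (Nat.le_zero.mp (min'_le J 0 hJ0))
    have hK0 : K 0 = p.conjPart 0 := by
      have := (hbox 0 hm0).2
      rwa [hc0] at this
    have hrow : (seq 0).1.part i ≤ 1 := by
      rw [h0]
      by_contra h
      have := (lt_conjPart_iff hp).mpr (show 1 < p.part i by omega)
      omega
    rw [entry_col_zero_of_chain hins hK hm0 (fun l hl1 hlm => ?_) (i + 1),
      (hins 0 hm0).entry_succ_col_zero (hK 0 hm0) hc0 (by omega) hrow]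
    rw [← hc0]
    exact strictMonoOn_part_of_chain hins hw hK hm0 hlm (by omega)
  · rw [add_zero]
    exact entry_col_zero_of_chain hins hK (Nat.zero_le m)
      (fun l _ hlm => Nat.pos_of_ne_zero fun h => hJ0 (h ▸ (hbox l hlm).1)) i

theorem entry_cellH_of_not_PH (hp : Antitone p.part) (hJ : J ∈ Hset p m) {L : Tab p}
    {M : Tab (rowShape m)} {T : Tab (shapeH p J)} (hseq0 : seq 0 = ⟨p, L⟩)
    (hseqm : seq m = ⟨shapeH p J, T⟩)
    (hins : ∀ l < m, IsRowInsert (seq l) (M.entry 0 l) (seq (l + 1))) {x : VH p m}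
    (hx : ¬ PH p m x) :
    T.entry (cellH p (card_of_mem_Hset hJ) x).1 (cellH p (card_of_mem_Hset hJ) x).2
      = entryLM L M x := by
  obtain ⟨K, hK⟩ := exists_growsAt_of_chain hins
  have hw : MonotoneOn (M.entry 0) (Set.Iio m) := fun a _ b hb hab => M.row_weak' 0 a b hab hb
  have h0 : (seq 0).1 = p := by rw [hseq0]
  have hm : (seq m).1 = shapeH p J := by rw [hseqm]
  rcases x with ⟨⟨i, c⟩, hc⟩ | k
  · simp only [PH, Sum.elim_inl, not_or, not_not, not_lt] at hx
    obtain ⟨rfl, hi1⟩ := hx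
    have := entry_col_zero_of_chain_shapeH hp hJ hins hw hK h0 hm hi1
      ((mem_cells_iff_lt_conjPart hp).mp hc)
    rw [hseqm, hseq0] at this
    simpa [cellH, entryLM] using this
  · simp only [PH, Sum.elim_inr, not_lt] at hx
    have := entry_zero_of_chain_shapeH hp hJ hins hw hK h0 hm k.2 hx
    rw [part_eq_orderEmbOfFin_of_chain hp hJ hins hw hK h0 hm k, hseqm] at this
    simpa [cellH, entryLM] using this

end PieriChain

theorem row_insert_term_sum_general
    (p : Shape) (hpart : Antitone p.part) (m : ℕ)
    (L : Tab p)
    (M : Tab (rowShape m))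
    (J : Finset ℕ) (hJ : J ∈ Hset p m)
    (T : Tab (shapeH p J))
    (seq : ℕ → Σ q : Shape, Tab q)
    (hseq0 : seq 0 = ⟨p, L⟩) (hseqm : seq m = ⟨shapeH p J, T⟩)
    (hins : ∀ l, l < m → IsRowInsert (seq l) (M.entry 0 l) (seq (l + 1)))
    (v : VH p m → ℂ) :
    symSum (PH p m) v
      (fun w => 1 / (L.pw (sfillH p m w) * M.pw (fun c => tfillH p m w c.2)))
    = symSum (PH p m) v
      (fun w => 1 / T.pw (pushH J (sfillH p m w) (tfillH p m w))) := by
  simp only [pw_mul_pw_eq_prod_entryLM, pw_pushH hpart hJ]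
  refine symSum_one_div_prod_pow_congr _ v
    (fun x hx => (entry_cellH_of_not_PH hpart hJ hseq0 hseqm hins hx).symm) ?_
  have hentries := entries_of_chain hins
  rw [hseq0, hseqm] at hentries
  rw [map_univ_entryLM, ← entries_eq_map_cellH hpart hJ, hentries, add_comm]

/-- **Lemma 4.6** (key lemma for the `H`-type Pieri formula).
If row-inserting the letters `w_1, …, w_m` of the one-row tableau `M` into `L`
produces a tableau `T` of shape `λ^J` with `J ∈ H(λ,m)`, then
`Σ_sym 1/(L^s M^t) = Σ_sym 1/T^{u^J}`. -/
theorem row_insert_term_sum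
    (p : Shape) (hpart : Antitone p.part) (r m N : ℕ) (hr : p.part 0 = r) (hm : 0 < m)
    (hN : p.length + 1 ≤ N)
    (L : Tab p) (hL : ∀ i j, L.entry i j ≤ N)
    (M : Tab (rowShape m)) (hM : ∀ i j, M.entry i j ≤ N)
    (J : Finset ℕ) (hJ : J ∈ Hset p m)
    (T : Tab (shapeH p J))
    (seq : ℕ → Σ q : Shape, Tab q)
    (hseq0 : seq 0 = ⟨p, L⟩) (hseqm : seq m = ⟨shapeH p J, T⟩)
    (hins : ∀ l, l < m → IsRowInsert (seq l) (M.entry 0 l) (seq (l + 1)))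
    (v : VH p m → ℂ) :
    symSum (PH p m) v
      (fun w => 1 / (L.pw (sfillH p m w) * M.pw (fun c => tfillH p m w c.2)))
    = symSum (PH p m) v
      (fun w => 1 / T.pw (pushH J (sfillH p m w) (tfillH p m w))) :=
  row_insert_term_sum_general p hpart m L M J hJ T seq hseq0 hseqm hins v
end

section
/- Let μ, ν, λ be partitions with |λ| = |μ| + |ν|. Let L ∈ SSYT(μ), M ∈ SSYT(ν), and T ∈ SSYT(λ) be semistandard tableaux such that the multiset of entries of T equals the union of the multisets of entries of L and of M (i.e., T has the same weight as the pair (L,M)). Let s = (s_{ij}) ∈ T(μ,ℂ), t = (t_{ij}) ∈ T(ν,ℂ), and let u_λ be any fixed filling of D(λ) with the variables {s_{ij} : (i,j) ∈ D(μ)} ∪ {t_{ij} : (i,j) ∈ D(ν)}. Then Σ_sym 1/(L^s · M^t) = Σ_sym 1/T^{u_λ}, where Σ_sym denotes the sum over all permutations of the variables {s_{ij} : (i,j) ∈ D(μ)} ∪ {t_{ij} : (i,j) ∈ D(ν)} among their positions (the same permutation applied on both sides). -/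
open scoped Classical

lemma natcard_subtype_mem_filter {α : Type*} (s : Finset α) (Q : α → Prop) [DecidablePred Q] :
    Nat.card {x : {c // c ∈ s} // Q x.1} = (s.filter Q).card := by
  classical
  rw [Nat.card_congr ((Equiv.subtypeSubtypeEquivSubtypeInter (· ∈ s) Q).trans
    (Equiv.subtypeEquivRight (fun c => (Finset.mem_filter (s := s)).symm)))]
  exact Nat.card_eq_finsetCard _

set_option maxHeartbeats 2000000

/-- The term identity used in the proof of the Littlewood–Richardson rule (Theorem 5.1):
if `T ∈ SSYT(λ)` has the same weight as the pair `(L, M) ∈ SSYT(μ) × SSYT(ν)`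
(the multiset of entries of `T` is the union of those of `L` and `M`), then for any
fixed filling `u_λ` of `D(λ)` by the variables (given by a bijection `U`),
`Σ_sym 1/(L^s M^t) = Σ_sym 1/T^{u_λ}`, where all the variables are permuted. -/
theorem weight_term_sum
    (mu nu lam : Shape) (hmu : Antitone mu.part) (hnu : Antitone nu.part)
    (hlam : Antitone lam.part)
    (hsize : lam.size = mu.size + nu.size)
    (L : Tab mu) (M : Tab nu) (T : Tab lam)
    (hw : ∀ x : ℕ, entryCount T x = entryCount L x + entryCount M x)
    (v : VLR mu nu → ℂ)
    (U : {c : ℕ × ℕ // c ∈ lam.cells} ≃ VLR mu nu) :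
    symSum (fun _ => True) v
      (fun w => 1 / (L.pw (sfillLR mu nu w) * M.pw (tfillLR mu nu w)))
    = symSum (fun _ => True) v
      (fun w => 1 / T.pw (uFill lam.cells U w)) := by
  classical
  set e1 : VLR mu nu → ℕ :=
    Sum.elim (fun c => L.entry c.1.1 c.1.2) (fun c => M.entry c.1.1 c.1.2) with he1
  set e2 : VLR mu nu → ℕ := fun x => T.entry (U.symm x).1.1 (U.symm x).1.2 with he2
  have hcard : ∀ k, Fintype.card {x // e2 x = k} = Fintype.card {x // e1 x = k} := by
    intro k
    rw [← Nat.card_eq_fintype_card, ← Nat.card_eq_fintype_card]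
    have h2 : Nat.card {x // e2 x = k} = entryCount T k := by
      rw [Nat.card_congr (Equiv.subtypeEquiv U.symm (fun x => Iff.rfl) :
        {x // e2 x = k} ≃ {c : {c // c ∈ lam.cells} // T.entry c.1.1 c.1.2 = k})]
      unfold entryCount
      exact natcard_subtype_mem_filter lam.cells (fun c => T.entry c.1 c.2 = k)
    have h1 : Nat.card {x // e1 x = k} = entryCount L k + entryCount M k := by
      rw [Nat.card_congr (Equiv.subtypeSum (p := fun x => e1 x = k)), Nat.card_sum]
      unfold entryCount
      congr 1
      · exact natcard_subtype_mem_filter mu.cells (fun c => L.entry c.1 c.2 = k)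
      · exact natcard_subtype_mem_filter nu.cells (fun c => M.entry c.1 c.2 = k)
    rw [h1, h2, hw k]
  let π : Equiv.Perm (VLR mu nu) :=
    ((Equiv.sigmaFiberEquiv e2).symm.trans
      (Equiv.sigmaCongrRight fun k => Fintype.equivOfCardEq (hcard k))).trans
      (Equiv.sigmaFiberEquiv e1)
  have hπ : ∀ x, e1 (π x) = e2 x := by
    intro x
    exact (Fintype.equivOfCardEq (hcard (e2 x)) ⟨x, rfl⟩).2
  have key1 : ∀ w : VLR mu nu → ℂ,
      L.pw (sfillLR mu nu w) * M.pw (tfillLR mu nu w)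
        = ∏ x : VLR mu nu, (e1 x : ℂ) ^ w x := by
    intro w
    rw [Fintype.prod_sum_type]
    congr 1
    · rw [Tab.pw, ← Finset.prod_coe_sort]
      apply Fintype.prod_congr
      intro c
      have : sfillLR mu nu w c.1 = w (Sum.inl c) := by
        rw [sfillLR, dif_pos c.2]
      rw [this]
      rfl
    · rw [Tab.pw, ← Finset.prod_coe_sort]
      apply Fintype.prod_congr
      intro c
      have : tfillLR mu nu w c.1 = w (Sum.inr c) := by
        rw [tfillLR, dif_pos c.2]
      rw [this]
      rfl
  have key2 : ∀ w : VLR mu nu → ℂ,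
      T.pw (uFill lam.cells U w) = ∏ x : VLR mu nu, (e2 x : ℂ) ^ w x := by
    intro w
    rw [Tab.pw, ← Finset.prod_coe_sort, ← Equiv.prod_comp U.symm
      (fun c : {c // c ∈ lam.cells} => (T.entry c.1.1 c.1.2 : ℂ) ^ uFill lam.cells U w c.1)]
    apply Fintype.prod_congr
    intro x
    have : uFill lam.cells U w (U.symm x).1 = w x := by
      rw [uFill, dif_pos (U.symm x).2, Subtype.coe_eta, Equiv.apply_symm_apply]
    rw [this]
  simp only [symSum, not_true_eq_false, false_implies, implies_true, Finset.filter_true]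
  refine Fintype.sum_equiv (Equiv.mulRight π)
    (fun σ => 1 / (L.pw (sfillLR mu nu (v ∘ σ)) * M.pw (tfillLR mu nu (v ∘ σ))))
    (fun σ => 1 / T.pw (uFill lam.cells U (v ∘ σ))) ?_
  intro σ
  simp only [Equiv.coe_mulRight]
  rw [key1, key2]
  congr 1
  simp only [Function.comp]
  rw [← Equiv.prod_comp π (fun x => (e1 x : ℂ) ^ v (σ x))]
  apply Fintype.prod_congr
  intro y
  rw [hπ y]
  rfl
end

section
/- Let λ be a partition and let C(λ) be the set of corners of λ. Then the series ζ_λ(s) = Σ_{M ∈ SSYT(λ)} 1/M^s converges absolutely for every s in the region W_λ = {s = (s_{ij}) ∈ T(λ,ℂ) : Re(s_{ij}) ≥ 1 for all (i,j) ∈ D(λ), and Re(s_{ij}) > 1 for all (i,j) ∈ C(λ)}. -/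
open scoped Classical

-- ==================== AUXILIARY ====================

noncomputable section ZetaSummableAux

private lemma summable_pi_nat_prod_fin : ∀ (n : ℕ) (g : Fin n → ℕ → ℝ),
    (∀ i k, 0 ≤ g i k) → (∀ i, Summable (g i)) →
    Summable (fun f : Fin n → ℕ => ∏ i, g i (f i)) := by
  intro n
  induction n with
  | zero =>
    intro g _ _
    exact Summable.of_finite
  | succ n ih =>
    intro g h0 hs
    have htail : Summable (fun f : Fin n → ℕ => ∏ i, g i.succ (f i)) :=
      ih (fun i => g i.succ) (fun i k => h0 _ _) (fun i => hs _)
    have h : Summable (fun x : ℕ × (Fin n → ℕ) => g 0 x.1 * ∏ i, g i.succ (x.2 i)) := by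
      apply Summable.mul_of_nonneg (hs 0) htail (fun k => h0 0 k)
      intro f
      exact Finset.prod_nonneg fun i _ => h0 _ _
    have heq : ((fun f : Fin (n + 1) → ℕ => ∏ i, g i (f i)) ∘ ⇑(Fin.consEquiv (fun _ => ℕ)))
        = fun x : ℕ × (Fin n → ℕ) => g 0 x.1 * ∏ i, g i.succ (x.2 i) := by
      funext x
      simp [Fin.prod_univ_succ, Fin.consEquiv]
    exact (Fin.consEquiv (fun _ => ℕ)).summable_iff.mp (heq ▸ h)

private lemma summable_pi_nat_prod {ι : Type} [Fintype ι] (g : ι → ℕ → ℝ)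
    (h0 : ∀ i k, 0 ≤ g i k) (hs : ∀ i, Summable (g i)) :
    Summable (fun f : ι → ℕ => ∏ i, g i (f i)) := by
  classical
  set e := Fintype.equivFin ι with he
  have h := summable_pi_nat_prod_fin (Fintype.card ι) (fun j => g (e.symm j))
    (fun j k => h0 _ _) (fun j => hs _)
  set E : (ι → ℕ) ≃ (Fin (Fintype.card ι) → ℕ) := Equiv.arrowCongr e (Equiv.refl ℕ) with hE
  have h2 := E.summable_iff.mpr h
  have heq : ((fun f : Fin (Fintype.card ι) → ℕ => ∏ j, g (e.symm j) (f j)) ∘ E)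
      = fun f : ι → ℕ => ∏ i, g i (f i) := by
    funext f
    simp only [Function.comp_apply, hE, Equiv.arrowCongr_apply, Equiv.refl_apply]
    exact Equiv.prod_comp e.symm (fun i => g i (f i))
  rwa [heq] at h2

private def zCorners (p : Shape) : Finset (ℕ × ℕ) :=
  p.cells.filter (fun c => (c.1 + 1, c.2) ∉ p.cells ∧ (c.1, c.2 + 1) ∉ p.cells)

private def zKappa (p : Shape) (c : ℕ × ℕ) : ℕ × ℕ :=
  (p.conjPart (p.part c.1 - 1) - 1, p.part c.1 - 1)

private lemma zPart_conjPart_le (p : Shape) (j : ℕ) : p.part (p.conjPart j) ≤ j :=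
  Nat.find_spec (p.conj_exists j)

private lemma zLt_conjPart {p : Shape} (hpart : Antitone p.part) {i j : ℕ}
    (h : j < p.part i) : i < p.conjPart j := by
  by_contra hcon
  push_neg at hcon
  have := le_trans (hpart hcon) (zPart_conjPart_le p j)
  omega

private lemma zKappa_facts {p : Shape} (hpart : Antitone p.part) {c : ℕ × ℕ}
    (hc : c ∈ p.cells) :
    zKappa p c ∈ zCorners p ∧ c.1 ≤ (zKappa p c).1 ∧
      p.part (zKappa p c).1 = (zKappa p c).2 + 1 ∧
      (zKappa p c).2 + 1 = p.part c.1 := by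
  rw [Shape.mem_cells] at hc
  have hj0lt : p.part c.1 - 1 < p.part c.1 := by omega
  have hlt : c.1 < p.conjPart (p.part c.1 - 1) := zLt_conjPart hpart hj0lt
  have hpart_i0 : ¬ p.part (p.conjPart (p.part c.1 - 1) - 1) ≤ p.part c.1 - 1 :=
    Nat.find_min (p.conj_exists _)
      (show p.conjPart (p.part c.1 - 1) - 1 < p.conjPart (p.part c.1 - 1) by omega)
  have hrow_le : p.part (p.conjPart (p.part c.1 - 1) - 1) ≤ p.part c.1 :=
    hpart (by omega)
  have hbelow : p.part (p.conjPart (p.part c.1 - 1) - 1 + 1) ≤ p.part c.1 - 1 := by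
    have he : p.conjPart (p.part c.1 - 1) - 1 + 1 = p.conjPart (p.part c.1 - 1) := by
      omega
    rw [he]
    exact zPart_conjPart_le p _
  refine ⟨?_, ?_, ?_, ?_⟩
  · rw [zCorners, Finset.mem_filter]
    refine ⟨?_, ?_, ?_⟩ <;> simp only [zKappa, Shape.mem_cells] <;> omega
  · simp only [zKappa]
    omega
  · simp only [zKappa]
    omega
  · simp only [zKappa]
    omega

private lemma zEntry_le_kappa {p : Shape} (hpart : Antitone p.part) (T : Tab p)
    {c : ℕ × ℕ} (hc : c ∈ p.cells) :
    T.entry c.1 c.2 ≤ T.entry (zKappa p c).1 (zKappa p c).2 := by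
  obtain ⟨_, hc1le, hrow, hj0⟩ := zKappa_facts hpart hc
  rw [Shape.mem_cells] at hc
  have step1 : T.entry c.1 c.2 ≤ T.entry c.1 (zKappa p c).2 :=
    T.row_weak' c.1 c.2 _ (by omega) (by omega)
  have step2 : T.entry c.1 (zKappa p c).2 ≤ T.entry (zKappa p c).1 (zKappa p c).2 := by
    rcases eq_or_lt_of_le hc1le with h | h
    · rw [h]
    · exact (T.col_strict' c.1 _ _ h (by omega)).le
  omega

private def zTabRestrict (p : Shape) (T : Tab p) : {c : ℕ × ℕ // c ∈ p.cells} → ℕ :=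
  fun c => T.entry c.1.1 c.1.2

private lemma zTabRestrict_injective (p : Shape) : Function.Injective (zTabRestrict p) := by
  intro T1 T2 h
  have he : T1.entry = T2.entry := by
    funext i j
    by_cases hij : j < p.part i
    · exact congrFun h ⟨(i, j), Shape.mem_cells.mpr hij⟩
    · rw [T1.zeros' i j (le_of_not_gt hij), T2.zeros' i j (le_of_not_gt hij)]
  cases T1; cases T2; simpa using he

end ZetaSummableAux


set_option maxHeartbeats 1000000 in
/-- **Proposition 3.3** (Lemma 2.1 of Nakasuji–Phuksuwan–Yamasaki): the series
`ζ_λ(s) = Σ_{M ∈ SSYT(λ)} 1/M^s` converges absolutely for every `s` in the region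
`W_λ` (real parts `≥ 1` on all cells of `D(λ)` and `> 1` on all corners of `λ`). -/
theorem zeta_summable
    (p : Shape) (hpart : Antitone p.part) (s : ℕ × ℕ → ℂ)
    (h1 : ∀ c ∈ p.cells, 1 ≤ (s c).re)
    (h2 : ∀ c ∈ p.cells, (c.1 + 1, c.2) ∉ p.cells → (c.1, c.2 + 1) ∉ p.cells →
      1 < (s c).re) :
    Summable (fun T : Tab p => ‖1 / T.pw s‖) := by
  classical
  have hinj : Function.Injective (zTabRestrict p) := zTabRestrict_injective p
  by_cases hne : p.cells.Nonempty
  swap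
  · rw [Finset.not_nonempty_iff_eq_empty] at hne
    haveI : IsEmpty {c : ℕ × ℕ // c ∈ p.cells} := by
      constructor
      rintro ⟨c, hc⟩
      rw [hne] at hc
      exact absurd hc (Finset.notMem_empty c)
    haveI : Subsingleton ({c : ℕ × ℕ // c ∈ p.cells} → ℕ) :=
      ⟨fun f g => funext fun c => isEmptyElim c⟩
    haveI : Finite ({c : ℕ × ℕ // c ∈ p.cells} → ℕ) := Finite.of_subsingleton
    haveI : Finite (Tab p) := Finite.of_injective _ hinj
    exact Summable.of_finite
  obtain ⟨c₀, hc₀⟩ := hne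
  have hCrn_sub : zCorners p ⊆ p.cells := Finset.filter_subset _ _
  have hCrn_ne : (zCorners p).Nonempty := ⟨zKappa p c₀, (zKappa_facts hpart hc₀).1⟩
  have hCrn_gt : ∀ k ∈ zCorners p, 1 < (s k).re := by
    intro k hk
    rw [zCorners, Finset.mem_filter] at hk
    exact h2 k hk.1 hk.2.1 hk.2.2
  set ε : ℝ := (zCorners p).inf' hCrn_ne (fun k => (s k).re - 1) with hεdef
  have hε : 0 < ε := by
    rw [hεdef, Finset.lt_inf'_iff]
    intro k hk
    linarith [hCrn_gt k hk]
  have hεle : ∀ k ∈ zCorners p, 1 + ε ≤ (s k).re := by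
    intro k hk
    have h := Finset.inf'_le (fun k => (s k).re - 1) hk
    rw [← hεdef] at h
    linarith
  set N : ℕ := p.cells.card with hNdef
  set δ : ℝ := ε / (2 * (N + 1)) with hδdef
  have hδ : 0 < δ := by
    rw [hδdef]
    apply div_pos hε
    positivity
  have hδN : ∀ d : ℕ, d ≤ N → δ * d ≤ ε / 2 := by
    intro d hd
    have hle1 : δ * d ≤ δ * (N + 1) := by
      apply mul_le_mul_of_nonneg_left _ hδ.le
      exact_mod_cast Nat.le_succ_of_le hd
    have heq1 : δ * (N + 1) = ε / 2 := by
      rw [hδdef]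
      field_simp
    linarith
  set τ : ℕ × ℕ → ℝ := fun c => if c ∈ zCorners p then 1 + ε / 2 else 1 + δ with hτdef
  have hτ1 : ∀ c, 1 < τ c := by
    intro c
    rw [hτdef]
    dsimp only
    split <;> linarith
  set g : ({c : ℕ × ℕ // c ∈ p.cells} → ℕ) → ℝ :=
    fun f => ∏ c : {c : ℕ × ℕ // c ∈ p.cells}, 1 / (f c : ℝ) ^ τ c.1 with hgdef
  have hgsum : Summable g := by
    rw [hgdef]
    apply summable_pi_nat_prod (ι := {c : ℕ × ℕ // c ∈ p.cells})
      (g := fun c k => 1 / (k : ℝ) ^ τ c.1)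
    · exact fun c k => div_nonneg zero_le_one (Real.rpow_nonneg (Nat.cast_nonneg k) _)
    · exact fun c => Real.summable_one_div_nat_rpow.mpr (hτ1 c.1)
  -- pointwise facts
  have key : ∀ T : Tab p, ‖1 / T.pw s‖ ≤ (g ∘ zTabRestrict p) T := by
    intro T
    have hm0 : ∀ c : ℕ × ℕ, (0 : ℝ) ≤ (T.entry c.1 c.2 : ℝ) := fun c => Nat.cast_nonneg _
    have hm1 : ∀ c ∈ p.cells, (1 : ℝ) ≤ (T.entry c.1 c.2 : ℝ) := by
      intro c hc
      exact_mod_cast T.pos' c.1 c.2 (Shape.mem_cells.mp hc)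
    have hmk : ∀ c ∈ p.cells,
        (T.entry c.1 c.2 : ℝ) ≤ (T.entry (zKappa p c).1 (zKappa p c).2 : ℝ) := by
      intro c hc
      exact_mod_cast zEntry_le_kappa hpart T hc
    set m : ℕ × ℕ → ℝ := fun c => (T.entry c.1 c.2 : ℝ) with hmdef
    set B : Finset (ℕ × ℕ) := p.cells.filter (fun c => ¬ c ∈ zCorners p) with hBdef
    have hBsub : B ⊆ p.cells := Finset.filter_subset _ _
    have hA : p.cells.filter (fun c => c ∈ zCorners p) = zCorners p := by
      rw [Finset.filter_mem_eq_inter, Finset.inter_eq_right.mpr hCrn_sub]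
    -- claim C
    have claimC : ∏ c ∈ B, m c ^ δ ≤ ∏ k ∈ zCorners p, m k ^ (ε / 2) := by
      have hfib : ∀ c ∈ B, zKappa p c ∈ zCorners p := fun c hc =>
        (zKappa_facts hpart (hBsub hc)).1
      rw [← Finset.prod_fiberwise_of_maps_to hfib (fun c => m c ^ δ)]
      refine Finset.prod_le_prod (fun k _ => Finset.prod_nonneg fun c _ =>
        Real.rpow_nonneg (hm0 c) _) (fun k hk => ?_)
      calc ∏ c ∈ B.filter (fun c => zKappa p c = k), m c ^ δ
          ≤ ∏ _c ∈ B.filter (fun c => zKappa p c = k), m k ^ δ := by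
            refine Finset.prod_le_prod (fun c _ => Real.rpow_nonneg (hm0 c) _)
              (fun c hcf => ?_)
            obtain ⟨hcB, hck⟩ := Finset.mem_filter.mp hcf
            exact Real.rpow_le_rpow (hm0 c) (hck ▸ hmk c (hBsub hcB)) hδ.le
        _ = (m k ^ δ) ^ ((B.filter (fun c => zKappa p c = k)).card : ℕ) :=
            Finset.prod_const _
        _ = m k ^ (δ * ((B.filter (fun c => zKappa p c = k)).card : ℝ)) := by
            rw [← Real.rpow_natCast (m k ^ δ), ← Real.rpow_mul (hm0 k)]
        _ ≤ m k ^ (ε / 2) := by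
            apply Real.rpow_le_rpow_of_exponent_le (hm1 k (hCrn_sub hk))
            exact hδN _ (Finset.card_le_card
              ((Finset.filter_subset _ _).trans (Finset.filter_subset _ _)))
    -- products over cells
    have hAsplit : ∏ k ∈ zCorners p, m k ^ ((1 : ℝ) + ε)
        = (∏ k ∈ zCorners p, m k ^ ((1 : ℝ) + ε / 2)) * ∏ k ∈ zCorners p, m k ^ (ε / 2) := by
      rw [← Finset.prod_mul_distrib]
      refine Finset.prod_congr rfl fun k hk => ?_
      rw [show (1 : ℝ) + ε = (1 + ε / 2) + ε / 2 by ring,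
        Real.rpow_add (lt_of_lt_of_le one_pos (hm1 k (hCrn_sub hk)))]
    have hBsplit : ∏ c ∈ B, m c ^ ((1 : ℝ) + δ)
        = (∏ c ∈ B, m c) * ∏ c ∈ B, m c ^ δ := by
      rw [← Finset.prod_mul_distrib]
      refine Finset.prod_congr rfl fun c hc => ?_
      rw [Real.rpow_add (lt_of_lt_of_le one_pos (hm1 c (hBsub hc))), Real.rpow_one]
    have hsplitτ : ∏ c ∈ p.cells, m c ^ τ c
        = (∏ k ∈ zCorners p, m k ^ ((1 : ℝ) + ε / 2)) * ∏ c ∈ B, m c ^ ((1 : ℝ) + δ) := by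
      rw [← Finset.prod_filter_mul_prod_filter_not p.cells (fun c => c ∈ zCorners p)
        (fun c => m c ^ τ c), hA]
      congr 1
      · refine Finset.prod_congr rfl fun k hk => ?_
        rw [hτdef]
        simp [hk]
      · refine Finset.prod_congr rfl fun c hc => ?_
        rw [hτdef]
        simp [(Finset.mem_filter.mp hc).2]
    have step1 : (∏ k ∈ zCorners p, m k ^ ((1 : ℝ) + ε)) * ∏ c ∈ B, m c
        ≤ ∏ c ∈ p.cells, m c ^ (s c).re := by
      rw [← Finset.prod_filter_mul_prod_filter_not p.cells (fun c => c ∈ zCorners p)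
        (fun c => m c ^ (s c).re), hA]
      apply mul_le_mul
      · exact Finset.prod_le_prod (fun k _ => Real.rpow_nonneg (hm0 k) _)
          (fun k hk => Real.rpow_le_rpow_of_exponent_le (hm1 k (hCrn_sub hk)) (hεle k hk))
      · refine Finset.prod_le_prod (fun c _ => hm0 c) (fun c hc => ?_)
        nth_rewrite 1 [← Real.rpow_one (m c)]
        exact Real.rpow_le_rpow_of_exponent_le (hm1 c (hBsub hc))
          (h1 c (hBsub hc))
      · exact Finset.prod_nonneg fun c _ => hm0 c
      · exact Finset.prod_nonneg fun k _ => Real.rpow_nonneg (hm0 k) _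
    have hτle : ∏ c ∈ p.cells, m c ^ τ c ≤ ∏ c ∈ p.cells, m c ^ (s c).re := by
      have hAnn : (0 : ℝ) ≤ ∏ k ∈ zCorners p, m k ^ ((1 : ℝ) + ε / 2) :=
        Finset.prod_nonneg fun k _ => Real.rpow_nonneg (hm0 k) _
      have hBnn : (0 : ℝ) ≤ ∏ c ∈ B, m c := Finset.prod_nonneg fun c _ => hm0 c
      calc ∏ c ∈ p.cells, m c ^ τ c
          = (∏ k ∈ zCorners p, m k ^ ((1 : ℝ) + ε / 2))
              * ((∏ c ∈ B, m c) * ∏ c ∈ B, m c ^ δ) := by rw [hsplitτ, hBsplit]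
        _ ≤ (∏ k ∈ zCorners p, m k ^ ((1 : ℝ) + ε / 2))
              * ((∏ c ∈ B, m c) * ∏ k ∈ zCorners p, m k ^ (ε / 2)) := by
            exact mul_le_mul_of_nonneg_left
              (mul_le_mul_of_nonneg_left claimC hBnn) hAnn
        _ = ((∏ k ∈ zCorners p, m k ^ ((1 : ℝ) + ε / 2))
              * ∏ k ∈ zCorners p, m k ^ (ε / 2)) * ∏ c ∈ B, m c := by ring
        _ = (∏ k ∈ zCorners p, m k ^ ((1 : ℝ) + ε)) * ∏ c ∈ B, m c := by rw [hAsplit]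
        _ ≤ ∏ c ∈ p.cells, m c ^ (s c).re := step1
    -- norms
    have hτpos : 0 < ∏ c ∈ p.cells, m c ^ τ c :=
      Finset.prod_pos fun c hc => Real.rpow_pos_of_pos
        (lt_of_lt_of_le one_pos (hm1 c hc)) _
    have hnorm : ‖T.pw s‖ = ∏ c ∈ p.cells, m c ^ (s c).re := by
      rw [Tab.pw, norm_prod]
      refine Finset.prod_congr rfl fun c hc => ?_
      exact Complex.norm_natCast_cpow_of_pos (T.pos' c.1 c.2 (Shape.mem_cells.mp hc)) _
    have hgval : (g ∘ zTabRestrict p) T = (∏ c ∈ p.cells, m c ^ τ c)⁻¹ := by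
      simp only [Function.comp_apply, hgdef]
      show (∏ c : {c : ℕ × ℕ // c ∈ p.cells}, 1 / (T.entry c.1.1 c.1.2 : ℝ) ^ τ c.1) = _
      rw [Finset.prod_coe_sort p.cells
        (fun c => 1 / (T.entry c.1 c.2 : ℝ) ^ τ c)]
      rw [← Finset.prod_inv_distrib]
      refine Finset.prod_congr rfl fun c _ => one_div _
    rw [hgval, norm_div, norm_one, hnorm]
    rw [div_eq_mul_inv, one_mul]
    exact inv_anti₀ hτpos hτle
  exact Summable.of_nonneg_of_le (fun T => norm_nonneg _) key
    (hgsum.comp_injective hinj)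
end
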